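/- arXiv:2011.02343 — 3 statements merged into one kernel-verified Lean document; each statement's English description precedes it below -/
import Mathlib

section
/- Let 0 < q < 1 and 0 < W₀ < 1 < W₁. For w ∈ [W₀, W₁], define h_k(w) = (w^{k−1}−1)/(k−1) for k ≠ 1, so h₂(w) = w−1 and h_q(w) = (w^{q−1}−1)/(q−1). Then for all w ∈ [W₀, W₁] with w ≠ 1: W₀^{2(2−q)} ≤ (h₂(w)/h_q(w))² ≤ W₁^{2(2−q)}. -/
/-!
By the mean value theorem applied to `x ↦ x ^ (q - 1)` between `w` and `1`, the quotient
`h₂(w) / h_q(w)` equals `c ^ (2 - q)` for some `c` strictly between `w` and `1`, hence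
`c ∈ [W₀, W₁]`; the bounds follow by monotonicity of `x ↦ x ^ (2 (2 - q))`.
-/

open Real Set

lemma exists_mem_Ioo_rpow_sub_rpow_eq (r : ℝ) {a b : ℝ} (ha : 0 < a) (hab : a < b) :
    ∃ c ∈ Ioo a b, b ^ r - a ^ r = r * c ^ (r - 1) * (b - a) := by
  have hderiv : ∀ x ∈ Ioo a b, HasDerivAt (fun x : ℝ => x ^ r) (r * x ^ (r - 1)) x :=
    fun x hx => hasDerivAt_rpow_const (Or.inl (ha.trans hx.1).ne')
  have hcont : ContinuousOn (fun x : ℝ => x ^ r) (Icc a b) :=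
    continuousOn_id.rpow_const fun x hx => Or.inl (ha.trans_le hx.1).ne'
  obtain ⟨c, hc, hslope⟩ := exists_hasDerivAt_eq_slope _ _ hab hcont hderiv
  refine ⟨c, hc, ?_⟩
  rw [hslope, div_mul_cancel₀ _ (sub_pos.2 hab).ne']

lemma exists_mem_Icc_rpow_sub_one_eq (r : ℝ) {W₀ W₁ w : ℝ} (hW₀ : 0 < W₀) (hW₀₁ : W₀ ≤ 1)
    (hW₁ : 1 ≤ W₁) (hw : w ∈ Icc W₀ W₁) (hw₁ : w ≠ 1) :
    ∃ c ∈ Icc W₀ W₁, w ^ r - 1 = r * c ^ (r - 1) * (w - 1) := by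
  rcases hw₁.lt_or_gt with hlt | hgt
  · obtain ⟨c, hc, h⟩ := exists_mem_Ioo_rpow_sub_rpow_eq r (hW₀.trans_le hw.1) hlt
    refine ⟨c, ⟨hw.1.trans hc.1.le, hc.2.le.trans hW₁⟩, ?_⟩
    rw [one_rpow] at h
    linear_combination -h
  · obtain ⟨c, hc, h⟩ := exists_mem_Ioo_rpow_sub_rpow_eq r one_pos hgt
    refine ⟨c, ⟨hW₀₁.trans hc.1.le, hc.2.le.trans hw.2⟩, ?_⟩
    rwa [one_rpow] at h

lemma sub_one_div_eq_rpow_of_rpow_sub_one_eq {r c w : ℝ} (hr : r ≠ 0) (hc : 0 < c)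
    (hw : w ≠ 1) (h : w ^ r - 1 = r * c ^ (r - 1) * (w - 1)) :
    (w - 1) / ((w ^ r - 1) / r) = c ^ (1 - r) := by
  have hw' : w - 1 ≠ 0 := sub_ne_zero.2 hw
  rw [h, show 1 - r = -(r - 1) by ring, rpow_neg hc.le]
  field_simp

theorem h2_over_hq_bounds_general (q W₀ W₁ : ℝ) (hq1 : q < 1)
    (hW0 : 0 < W₀) (hW01 : W₀ < 1) (hW1 : 1 < W₁) :
    ∀ w : ℝ, w ∈ Set.Icc W₀ W₁ → w ≠ 1 →
      W₀ ^ (2 * (2 - q)) ≤ ((w - 1) / ((w ^ (q - 1) - 1) / (q - 1))) ^ 2 ∧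
      ((w - 1) / ((w ^ (q - 1) - 1) / (q - 1))) ^ 2 ≤ W₁ ^ (2 * (2 - q)) := by
  intro w hw hw₁
  obtain ⟨c, ⟨hW₀c, hcW₁⟩, hmvt⟩ :=
    exists_mem_Icc_rpow_sub_one_eq (q - 1) hW0 hW01.le hW1.le hw hw₁
  have hc : 0 < c := hW0.trans_le hW₀c
  have hexp : (0 : ℝ) ≤ 2 * (2 - q) := by linarith
  rw [sub_one_div_eq_rpow_of_rpow_sub_one_eq (by linarith) hc hw₁ hmvt,
    show 1 - (q - 1) = 2 - q by ring, ← rpow_mul_natCast hc.le, Nat.cast_ofNat,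
    mul_comm (2 - q)]
  exact ⟨rpow_le_rpow hW0.le hW₀c hexp, rpow_le_rpow hc.le hcW₁ hexp⟩

theorem h2_over_hq_bounds (q W₀ W₁ : ℝ) (hq0 : 0 < q) (hq1 : q < 1)
    (hW0 : 0 < W₀) (hW01 : W₀ < 1) (hW1 : 1 < W₁) :
    ∀ w : ℝ, w ∈ Set.Icc W₀ W₁ → w ≠ 1 →
      W₀ ^ (2 * (2 - q)) ≤ ((w - 1) / ((w ^ (q - 1) - 1) / (q - 1))) ^ 2 ∧
      ((w - 1) / ((w ^ (q - 1) - 1) / (q - 1))) ^ 2 ≤ W₁ ^ (2 * (2 - q)) :=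
  h2_over_hq_bounds_general q W₀ W₁ hq1 hW0 hW01 hW1
end

section
/- Let λ ≥ 2, and let ρ_∞ be a probability density on ℝ^N with ∫ρ_∞ = 1, ∫ y ρ_∞(y) dy = 0, and finite moments ∫|y|²ρ_∞ and ∫|y|^λρ_∞. Then for all x ∈ ℝ^N: 0 ≤ (V_λ * ρ_∞)(x) − V_λ(x) ≤ κ(N,λ)·[∫|y|²ρ_∞(y) dy · |x|^{λ−2} + ∫|y|^λ ρ_∞(y) dy], where V_λ(x) = |x|^λ/λ and κ(N,λ) > 0 is a constant depending only on N and λ. -/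
/-!
Write `R(x, y) = ‖x - y‖^λ - ‖x‖^λ + λ ‖x‖^(λ-2) ⟪x, y⟫` for the first-order Taylor remainder of
`‖·‖^λ` at `x`. Since `ρ` has mass one and mean zero, the linear term integrates away and
`(V_λ * ρ)(x) - V_λ(x) = λ⁻¹ ∫ R(x, y) ρ(y) dy`. The gradient inequality for the convex function
`‖·‖^λ` at `x` gives `R ≥ 0`; at `x - y` it gives
`R ≤ λ ((‖x‖^(λ-2) - ‖x - y‖^(λ-2)) ⟪x, y⟫ + ‖x - y‖^(λ-2) ‖y‖²)`.
The difference of powers is at most of order `‖y‖^(λ-2)` when `‖x‖ ≤ 2‖y‖`, and otherwise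
`‖x - y‖ / ‖x‖ ∈ [1/2, 3/2]`, where `t ↦ t^(λ-2)` is Lipschitz.
-/

open Real MeasureTheory Set

theorem rpow_add_mul_rpow_sub_one_mul_le_rpow {p r t : ℝ} (hp : 1 ≤ p) (hr : 0 < r) (ht : 0 ≤ t) :
    r ^ p + p * r ^ (p - 1) * (t - r) ≤ t ^ p := by
  have h := one_add_mul_self_le_rpow_one_add (s := t / r - 1) (by linarith [div_nonneg ht hr.le]) hp
  rw [add_sub_cancel, div_rpow ht hr.le, le_div_iff₀ (rpow_pos_of_pos hr p)] at h
  calc r ^ p + p * r ^ (p - 1) * (t - r) = (1 + p * (t / r - 1)) * r ^ p := by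
        rw [rpow_sub_one hr.ne']; field_simp
    _ ≤ t ^ p := h

theorem add_rpow_le_two_rpow_mul_add {a b t : ℝ} (ha : 0 ≤ a) (hb : 0 ≤ b) (ht : 0 ≤ t) :
    (a + b) ^ t ≤ 2 ^ t * (a ^ t + b ^ t) := by
  wlog hab : b ≤ a generalizing a b
  · simpa only [add_comm] using this hb ha (le_of_not_ge hab)
  calc (a + b) ^ t ≤ (2 * a) ^ t := rpow_le_rpow (by positivity) (by linarith) ht
    _ = 2 ^ t * a ^ t := mul_rpow (by norm_num) ha
    _ ≤ 2 ^ t * (a ^ t + b ^ t) := by gcongr; linarith [rpow_nonneg hb t]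

theorem rpow_sub_two_mul_sq {p t : ℝ} (hp : p ≠ 0) (ht : 0 ≤ t) : t ^ (p - 2) * t ^ 2 = t ^ p := by
  rw [← rpow_natCast, ← rpow_add' ht (by norm_num; exact hp)]
  norm_num

theorem exists_abs_rpow_sub_one_le (q : ℝ) :
    ∃ L : ℝ, 0 ≤ L ∧ ∀ t : ℝ, |t - 1| ≤ 1 / 2 → |t ^ q - 1| ≤ L * |t - 1| := by
  have hsmooth : ContDiffOn ℝ 1 (fun t : ℝ ↦ t ^ q) (Icc (1 / 2) (3 / 2)) := fun t ht ↦
    (contDiffAt_rpow_const_of_ne (by linarith [ht.1])).contDiffWithinAt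
  obtain ⟨L, hL⟩ := hsmooth.exists_lipschitzOnWith one_ne_zero (convex_Icc _ _) isCompact_Icc
  refine ⟨L, L.2, fun t ht ↦ ?_⟩
  have hmem : ∀ s : ℝ, |s - 1| ≤ 1 / 2 → s ∈ Icc (1 / 2 : ℝ) (3 / 2) := fun s hs ↦ by
    rw [abs_le] at hs; constructor <;> linarith
  simpa [Real.dist_eq] using hL.dist_le_mul t (hmem t ht) 1 (hmem 1 (by norm_num))

theorem exists_abs_rpow_sub_rpow_mul_le {q : ℝ} (hq : 0 ≤ q) :
    ∃ C : ℝ, 0 ≤ C ∧ ∀ u r v : ℝ, 0 ≤ u → 0 ≤ r → |u - r| ≤ v →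
      |u ^ q - r ^ q| * u ≤ C * (u ^ q + v ^ q) * v := by
  obtain ⟨L, hL0, hL⟩ := exists_abs_rpow_sub_one_le q
  have h3 : 0 ≤ (3 : ℝ) ^ q := by positivity
  refine ⟨L + 4 * 3 ^ q, by positivity, fun u r v hu hr huv ↦ ?_⟩
  have hv : 0 ≤ v := (abs_nonneg _).trans huv
  have huq : 0 ≤ u ^ q := by positivity
  have hvq : 0 ≤ v ^ q := by positivity
  rcases le_or_gt u (2 * v) with hsmall | hlarge
  · have hbound : ∀ s, 0 ≤ s → s ≤ 3 * v → s ^ q ≤ 3 ^ q * v ^ q := fun s hs hs3 ↦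
      (rpow_le_rpow hs hs3 hq).trans_eq (mul_rpow (by norm_num) hv)
    have hdiff : |u ^ q - r ^ q| ≤ 2 * (3 ^ q * v ^ q) := by
      have hu3 := hbound u hu (by linarith)
      have hr3 := hbound r hr (by linarith [(abs_le.1 huv).2, (abs_le.1 huv).1])
      rw [abs_le]; constructor <;> linarith [rpow_nonneg hu q, rpow_nonneg hr q]
    calc |u ^ q - r ^ q| * u ≤ 2 * (3 ^ q * v ^ q) * (2 * v) :=
          mul_le_mul hdiff hsmall hu (by positivity)
      _ ≤ (L + 4 * 3 ^ q) * (u ^ q + v ^ q) * v := by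
          nlinarith [mul_nonneg (mul_nonneg hL0 (add_nonneg huq hvq)) hv,
            mul_nonneg (mul_nonneg h3 huq) hv]
  · have hu : 0 < u := by linarith
    have ht : |r / u - 1| ≤ 1 / 2 := by
      rw [div_sub_one hu.ne', abs_div, abs_of_pos hu, div_le_iff₀ hu, abs_sub_comm]
      linarith
    have hscale : |u ^ q - r ^ q| = u ^ q * |(r / u) ^ q - 1| := by
      rw [div_rpow hr hu.le, ← abs_of_nonneg huq, ← abs_mul, abs_of_nonneg huq, abs_sub_comm]
      congr 1; field_simp
    have hlin : |r / u - 1| * u = |u - r| := by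
      rw [div_sub_one hu.ne', abs_div, abs_of_pos hu, div_mul_cancel₀ _ hu.ne', abs_sub_comm]
    calc |u ^ q - r ^ q| * u ≤ u ^ q * (L * |r / u - 1|) * u := by
          rw [hscale]; gcongr; exact hL _ ht
      _ = L * u ^ q * |u - r| := by rw [← hlin]; ring
      _ ≤ (L + 4 * 3 ^ q) * (u ^ q + v ^ q) * v := by
          nlinarith [mul_le_mul_of_nonneg_left huv (mul_nonneg hL0 huq),
            mul_nonneg (mul_nonneg hL0 hvq) hv, mul_nonneg (mul_nonneg h3 (add_nonneg huq hvq)) hv]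

section NormedGroup

variable {E : Type*} [NormedAddCommGroup E] [MeasurableSpace E] [BorelSpace E]
  {μ : Measure E} {ρ : E → ℝ}

theorem integrable_norm_sub_rpow_mul {p : ℝ} (hp : 0 ≤ p) (x : E) (hρ0 : ∀ y, 0 ≤ ρ y)
    (hρ : Integrable ρ μ) (hpρ : Integrable (fun y ↦ ‖y‖ ^ p * ρ y) μ) :
    Integrable (fun y ↦ ‖x - y‖ ^ p * ρ y) μ := by
  have hcont : Continuous fun y : E ↦ ‖x - y‖ ^ p :=
    (continuous_const.sub continuous_id).norm.rpow_const fun _ ↦ Or.inr hp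
  refine (((hρ.const_mul (‖x‖ ^ p)).add hpρ).const_mul (2 ^ p)).mono'
    (hcont.aestronglyMeasurable.mul hρ.aestronglyMeasurable) (ae_of_all _ fun y ↦ ?_)
  have hsplit : ‖x - y‖ ^ p ≤ 2 ^ p * (‖x‖ ^ p + ‖y‖ ^ p) :=
    (rpow_le_rpow (norm_nonneg _) (norm_sub_le x y) hp).trans
      (add_rpow_le_two_rpow_mul_add (norm_nonneg _) (norm_nonneg _) hp)
  rw [norm_mul, norm_of_nonneg (by positivity), norm_of_nonneg (hρ0 y)]
  calc ‖x - y‖ ^ p * ρ y ≤ 2 ^ p * (‖x‖ ^ p + ‖y‖ ^ p) * ρ y :=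
        mul_le_mul_of_nonneg_right hsplit (hρ0 y)
    _ = 2 ^ p * (‖x‖ ^ p * ρ y + ‖y‖ ^ p * ρ y) := by ring

end NormedGroup

section InnerProduct

variable {E : Type*} [NormedAddCommGroup E] [InnerProductSpace ℝ E]

theorem norm_rpow_add_mul_inner_le_norm_rpow {p : ℝ} (hp : 1 ≤ p) (z w : E) :
    ‖z‖ ^ p + p * ‖z‖ ^ (p - 2) * inner ℝ z (w - z) ≤ ‖w‖ ^ p := by
  rcases eq_or_ne z 0 with rfl | hz
  · simp [zero_rpow (by linarith : p ≠ 0), rpow_nonneg]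
  have hu := norm_pos_iff.2 hz
  have hinner : inner ℝ z (w - z) ≤ ‖z‖ * (‖w‖ - ‖z‖) := by
    rw [inner_sub_right, real_inner_self_eq_norm_sq, mul_sub, ← sq]
    linarith [real_inner_le_norm z w]
  calc ‖z‖ ^ p + p * ‖z‖ ^ (p - 2) * inner ℝ z (w - z)
      ≤ ‖z‖ ^ p + p * ‖z‖ ^ (p - 2) * (‖z‖ * (‖w‖ - ‖z‖)) := by gcongr
    _ = ‖z‖ ^ p + p * ‖z‖ ^ (p - 1) * (‖w‖ - ‖z‖) := by
        rw [show p - 1 = p - 2 + 1 by ring, rpow_add_one hu.ne']; ring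
    _ ≤ ‖w‖ ^ p := rpow_add_mul_rpow_sub_one_mul_le_rpow hp hu (norm_nonneg w)

/-- `p ‖x‖^(p-2) x` is the gradient of `‖·‖^p` at `x`. -/
noncomputable def normRpowTaylorRemainder (p : ℝ) (x y : E) : ℝ :=
  ‖x - y‖ ^ p - ‖x‖ ^ p + p * ‖x‖ ^ (p - 2) * inner ℝ x y

theorem normRpowTaylorRemainder_nonneg {p : ℝ} (hp : 1 ≤ p) (x y : E) :
    0 ≤ normRpowTaylorRemainder p x y := by
  have h := norm_rpow_add_mul_inner_le_norm_rpow hp x (x - y)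
  rw [sub_sub_cancel_left, inner_neg_right] at h
  unfold normRpowTaylorRemainder
  linarith

theorem exists_normRpowTaylorRemainder_le {p : ℝ} (hp : 2 ≤ p) :
    ∃ K : ℝ, 0 < K ∧ ∀ x y : E,
      normRpowTaylorRemainder p x y ≤ K * (‖x‖ ^ (p - 2) * ‖y‖ ^ 2 + ‖y‖ ^ p) := by
  obtain ⟨C, hC0, hC⟩ := exists_abs_rpow_sub_rpow_mul_le (by linarith : 0 ≤ p - 2)
  refine ⟨p * (C + 2 ^ (p - 2)), by positivity, fun x y ↦ ?_⟩
  have hgrad := norm_rpow_add_mul_inner_le_norm_rpow (p := p) (by linarith) (x - y) x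
  rw [sub_sub_cancel, inner_sub_left, real_inner_self_eq_norm_sq] at hgrad
  set q := p - 2
  set u := ‖x‖
  set v := ‖y‖
  set r := ‖x - y‖
  have hur : |u - r| ≤ v := by simpa using abs_norm_sub_norm_le x (x - y)
  have hcross : (u ^ q - r ^ q) * inner ℝ x y ≤ C * (u ^ q + v ^ q) * v * v :=
    calc (u ^ q - r ^ q) * inner ℝ x y ≤ |u ^ q - r ^ q| * |inner ℝ x y| := by
          rw [← abs_mul]; exact le_abs_self _
      _ ≤ |u ^ q - r ^ q| * (u * v) := by gcongr; exact abs_real_inner_le_norm x y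
      _ = |u ^ q - r ^ q| * u * v := by ring
      _ ≤ C * (u ^ q + v ^ q) * v * v :=
          mul_le_mul_of_nonneg_right (hC u r v (norm_nonneg _) (norm_nonneg _) hur) (norm_nonneg y)
  have hr : r ^ q ≤ 2 ^ q * (u ^ q + v ^ q) :=
    (rpow_le_rpow (norm_nonneg _) (norm_sub_le x y) (by linarith)).trans
      (add_rpow_le_two_rpow_mul_add (norm_nonneg _) (norm_nonneg _) (by linarith))
  have hsq : r ^ q * v ^ 2 ≤ 2 ^ q * (u ^ q + v ^ q) * v ^ 2 := by gcongr
  have hp0 : 0 ≤ p := by linarith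
  calc normRpowTaylorRemainder p x y ≤ p * ((u ^ q - r ^ q) * inner ℝ x y + r ^ q * v ^ 2) := by
        unfold normRpowTaylorRemainder; linarith
    _ ≤ p * (C * (u ^ q + v ^ q) * v * v + 2 ^ q * (u ^ q + v ^ q) * v ^ 2) := by gcongr
    _ = p * (C + 2 ^ q) * (u ^ q * v ^ 2 + v ^ q * v ^ 2) := by ring
    _ = p * (C + 2 ^ q) * (u ^ q * v ^ 2 + v ^ p) := by
        rw [rpow_sub_two_mul_sq (by linarith) (norm_nonneg y)]

variable [MeasurableSpace E] {μ : Measure E} {ρ : E → ℝ}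

theorem integral_normRpowTaylorRemainder_mul_le {p K : ℝ} {x : E}
    (hK : ∀ y, normRpowTaylorRemainder p x y ≤ K * (‖x‖ ^ (p - 2) * ‖y‖ ^ 2 + ‖y‖ ^ p))
    (hR : ∀ y, 0 ≤ normRpowTaylorRemainder p x y) (hρ0 : ∀ y, 0 ≤ ρ y)
    (h2 : Integrable (fun y ↦ ‖y‖ ^ 2 * ρ y) μ) (hpρ : Integrable (fun y ↦ ‖y‖ ^ p * ρ y) μ) :
    ∫ y, normRpowTaylorRemainder p x y * ρ y ∂μ ≤
      K * ((∫ y, ‖y‖ ^ 2 * ρ y ∂μ) * ‖x‖ ^ (p - 2) + ∫ y, ‖y‖ ^ p * ρ y ∂μ) := by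
  calc ∫ y, normRpowTaylorRemainder p x y * ρ y ∂μ
      ≤ ∫ y, K * (‖x‖ ^ (p - 2) * (‖y‖ ^ 2 * ρ y) + ‖y‖ ^ p * ρ y) ∂μ := by
        refine integral_mono_of_nonneg (ae_of_all _ fun y ↦ mul_nonneg (hR y) (hρ0 y))
          (((h2.const_mul _).add hpρ).const_mul K) (ae_of_all _ fun y ↦ ?_)
        have := mul_le_mul_of_nonneg_right (hK y) (hρ0 y)
        linarith
    _ = K * ((∫ y, ‖y‖ ^ 2 * ρ y ∂μ) * ‖x‖ ^ (p - 2) + ∫ y, ‖y‖ ^ p * ρ y ∂μ) := by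
        rw [integral_const_mul, integral_add (h2.const_mul _) hpρ, integral_const_mul]
        ring

variable [BorelSpace E] [SecondCountableTopology E]

theorem integrable_smul_self_of_integrable_norm_sq_mul (hρ0 : ∀ y, 0 ≤ ρ y)
    (hρ : Integrable ρ μ) (h2 : Integrable (fun y ↦ ‖y‖ ^ 2 * ρ y) μ) :
    Integrable (fun y ↦ ρ y • y) μ := by
  refine (hρ.add h2).mono' (hρ.aestronglyMeasurable.smul aestronglyMeasurable_id)
    (ae_of_all _ fun y ↦ ?_)
  rw [Pi.add_apply, norm_smul, norm_of_nonneg (hρ0 y)]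
  nlinarith [hρ0 y, mul_nonneg (hρ0 y) (sq_nonneg (‖y‖ - 1))]

variable [CompleteSpace E]

theorem integral_norm_sub_rpow_mul_sub_norm_rpow {p : ℝ} (hp : 0 ≤ p) (x : E)
    (hρ0 : ∀ y, 0 ≤ ρ y) (hρ : Integrable ρ μ) (hρ1 : ∫ y, ρ y ∂μ = 1)
    (hmean : ∫ y, ρ y • y ∂μ = 0) (h2 : Integrable (fun y ↦ ‖y‖ ^ 2 * ρ y) μ)
    (hpρ : Integrable (fun y ↦ ‖y‖ ^ p * ρ y) μ) :
    (∫ y, ‖x - y‖ ^ p * ρ y ∂μ) - ‖x‖ ^ p = ∫ y, normRpowTaylorRemainder p x y * ρ y ∂μ := by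
  have hfirst := integrable_smul_self_of_integrable_norm_sq_mul hρ0 hρ h2
  have hexpand : (fun y ↦ normRpowTaylorRemainder p x y * ρ y) = fun y ↦
      (‖x - y‖ ^ p * ρ y - ‖x‖ ^ p * ρ y) + p * ‖x‖ ^ (p - 2) * inner ℝ x (ρ y • y) := by
    ext y; rw [inner_smul_right, normRpowTaylorRemainder]; ring
  have hcentered : ∫ y, inner ℝ x (ρ y • y) ∂μ = 0 := by
    rw [integral_inner hfirst, hmean, inner_zero_right]
  have hpower := integrable_norm_sub_rpow_mul hp x hρ0 hρ hpρ
  have hshift : Integrable (fun y ↦ ‖x - y‖ ^ p * ρ y - ‖x‖ ^ p * ρ y) μ :=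
    hpower.sub (hρ.const_mul _)
  rw [hexpand, integral_add hshift ((hfirst.const_inner x).const_mul _),
    integral_sub hpower (hρ.const_mul _), integral_const_mul, integral_const_mul, hρ1, hcentered]
  ring

end InnerProduct

theorem convolution_taylor_bound_general (N : ℕ) (lam : ℝ) (hlam : 2 ≤ lam) :
    ∃ κ : ℝ, 0 < κ ∧
      ∀ ρ : EuclideanSpace ℝ (Fin N) → ℝ,
        (∀ x, 0 ≤ ρ x) → Integrable ρ → (∫ x, ρ x) = 1 →
        (∫ x, ρ x • x) = 0 →
        Integrable (fun y => ‖y‖ ^ 2 * ρ y) →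
        Integrable (fun y => ‖y‖ ^ lam * ρ y) →
        ∀ x : EuclideanSpace ℝ (Fin N),
          0 ≤ (∫ y, ‖x - y‖ ^ lam / lam * ρ y) - ‖x‖ ^ lam / lam ∧
          (∫ y, ‖x - y‖ ^ lam / lam * ρ y) - ‖x‖ ^ lam / lam ≤
            κ * ((∫ y, ‖y‖ ^ 2 * ρ y) * ‖x‖ ^ (lam - 2) +
              ∫ y, ‖y‖ ^ lam * ρ y) := by
  obtain ⟨K, hK0, hK⟩ := exists_normRpowTaylorRemainder_le (E := EuclideanSpace ℝ (Fin N)) hlam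
  have hlam0 : 0 < lam := by linarith
  refine ⟨K / lam, div_pos hK0 hlam0, fun ρ hρ0 hρ hρ1 hmean h2 hlamρ x ↦ ?_⟩
  have hR := normRpowTaylorRemainder_nonneg (p := lam) (by linarith) x
  have hdiff : (∫ y, ‖x - y‖ ^ lam / lam * ρ y) - ‖x‖ ^ lam / lam =
      (∫ y, normRpowTaylorRemainder lam x y * ρ y) / lam := by
    rw [← integral_norm_sub_rpow_mul_sub_norm_rpow hlam0.le x hρ0 hρ hρ1 hmean h2 hlamρ,
      sub_div, ← integral_div]
    simp only [div_mul_eq_mul_div]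
  rw [hdiff, div_mul_eq_mul_div]
  exact ⟨div_nonneg (integral_nonneg fun y ↦ mul_nonneg (hR y) (hρ0 y)) hlam0.le,
    div_le_div_of_nonneg_right
      (integral_normRpowTaylorRemainder_mul_le (hK x) hR hρ0 h2 hlamρ) hlam0.le⟩

theorem convolution_taylor_bound (N : ℕ) (hN : 1 ≤ N) (lam : ℝ) (hlam : 2 ≤ lam) :
    ∃ κ : ℝ, 0 < κ ∧
      ∀ ρ : EuclideanSpace ℝ (Fin N) → ℝ,
        (∀ x, 0 ≤ ρ x) → Integrable ρ → (∫ x, ρ x) = 1 →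
        (∫ x, ρ x • x) = 0 →
        Integrable (fun y => ‖y‖ ^ 2 * ρ y) →
        Integrable (fun y => ‖y‖ ^ lam * ρ y) →
        ∀ x : EuclideanSpace ℝ (Fin N),
          0 ≤ (∫ y, ‖x - y‖ ^ lam / lam * ρ y) - ‖x‖ ^ lam / lam ∧
          (∫ y, ‖x - y‖ ^ lam / lam * ρ y) - ‖x‖ ^ lam / lam ≤
            κ * ((∫ y, ‖y‖ ^ 2 * ρ y) * ‖x‖ ^ (lam - 2) +
              ∫ y, ‖y‖ ^ lam * ρ y) :=
  convolution_taylor_bound_general N lam hlam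
end

section
/- Let N ≥ 1, λ > 0, q ∈ (N/(N+λ), 1), and let ρ_∞ be a nonnegative radially symmetric non-increasing probability density on ℝ^N with finite λ-moment. Then ∫∫ |x−y|^λ ρ_∞(x)ρ_∞(y) dx dy ≥ ∫ |x|^λ ρ_∞(x) dx. -/
open Real MeasureTheory Metric Set
open scoped ENNReal

/-! For fixed `x`, the layer-cake formula writes `∫ ‖x - y‖ ^ λ ρ(y) dy` through the `ρ`-masses
of the complements of the balls `closedBall x r`. The complement of `closedBall x r` differs from
that of `closedBall 0 r` by trading `closedBall 0 r \ closedBall x r` for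
`closedBall x r \ closedBall 0 r`, two sets of equal Lebesgue measure, and `ρ` is pointwise
larger on the first since it lies closer to the origin. Hence
`∫ ‖x - y‖ ^ λ ρ(y) dy ≥ ∫ ‖y‖ ^ λ ρ(y) dy` for every `x`, and integrating against `ρ(x) dx`,
a probability density, gives the inequality. -/

def RadiallyAntitone {E : Type*} [Norm E] (ρ : E → ℝ) : Prop :=
  ∀ x y : E, ‖x‖ ≤ ‖y‖ → ρ y ≤ ρ x

section Rearrangement

variable {α : Type*} [MeasurableSpace α] {μ : Measure α}

theorem withDensity_le_withDensity_of_forall_le {f : α → ℝ≥0∞} {s t : Set α}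
    (hs : MeasurableSet s) (ht : MeasurableSet t) (hμ : μ (s \ t) = μ (t \ s))
    (hf : ∀ a ∈ s \ t, ∀ b ∈ t \ s, f a ≤ f b) :
    μ.withDensity f s ≤ μ.withDensity f t := by
  -- `c` separates the values of `f` on `s \ t` from those on `t \ s`; it may be `∞`.
  set c := ⨅ b ∈ t \ s, f b
  have hdiff : μ.withDensity f (s \ t) ≤ μ.withDensity f (t \ s) :=
    calc μ.withDensity f (s \ t) = ∫⁻ a in s \ t, f a ∂μ := withDensity_apply _ (hs.diff ht)
      _ ≤ ∫⁻ _ in s \ t, c ∂μ := setLIntegral_mono measurable_const fun a ha => le_iInf₂ (hf a ha)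
      _ = ∫⁻ _ in t \ s, c ∂μ := by rw [setLIntegral_const, setLIntegral_const, hμ]
      _ ≤ ∫⁻ b in t \ s, f b ∂μ := setLIntegral_mono' (ht.diff hs) fun b hb => iInf₂_le b hb
      _ = μ.withDensity f (t \ s) := (withDensity_apply _ (ht.diff hs)).symm
  calc μ.withDensity f s = μ.withDensity f (s \ t) + μ.withDensity f (s ∩ t) :=
        (measure_sdiff_add_inter s ht).symm
    _ ≤ μ.withDensity f (t \ s) + μ.withDensity f (t ∩ s) := by rw [inter_comm]; gcongr
    _ = μ.withDensity f t := measure_sdiff_add_inter t hs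

theorem lintegral_rpow_le_lintegral_rpow_of_meas_lt_le {f g : α → ℝ} (hf₀ : 0 ≤ᵐ[μ] f)
    (hg₀ : 0 ≤ᵐ[μ] g) (hf : AEMeasurable f μ) (hg : AEMeasurable g μ) {p : ℝ} (hp : 0 < p)
    (hfg : ∀ t, μ {a | t < f a} ≤ μ {a | t < g a}) :
    ∫⁻ a, ENNReal.ofReal (f a ^ p) ∂μ ≤ ∫⁻ a, ENNReal.ofReal (g a ^ p) ∂μ := by
  rw [lintegral_rpow_eq_lintegral_meas_lt_mul μ hf₀ hf hp,
    lintegral_rpow_eq_lintegral_meas_lt_mul μ hg₀ hg hp]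
  exact mul_le_mul_right (lintegral_mono fun t => mul_le_mul_left (hfg t) _) _

end Rearrangement

section HaarMeasure

variable {E : Type*} [NormedAddCommGroup E] [MeasurableSpace E] [BorelSpace E] [ProperSpace E]
  {μ : Measure E} [μ.IsAddHaarMeasure]

theorem measure_closedBall_diff_closedBall_comm (x y : E) (r : ℝ) :
    μ (closedBall x r \ closedBall y r) = μ (closedBall y r \ closedBall x r) := by
  have hfin : μ (closedBall x r ∩ closedBall y r) ≠ ∞ :=
    (measure_mono inter_subset_left).trans_lt measure_closedBall_lt_top |>.ne
  rw [← ENNReal.add_left_inj hfin]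
  nth_rw 2 [inter_comm]
  rw [measure_sdiff_add_inter _ measurableSet_closedBall,
    measure_sdiff_add_inter _ measurableSet_closedBall, Measure.addHaar_closedBall_center,
    Measure.addHaar_closedBall_center μ y]

theorem RadiallyAntitone.withDensity_lt_norm_le_lt_norm_sub {ρ : E → ℝ}
    (hρ : RadiallyAntitone ρ) (x : E) (r : ℝ) :
    μ.withDensity (fun a => ENNReal.ofReal (ρ a)) {a | r < ‖a‖}
      ≤ μ.withDensity (fun a => ENNReal.ofReal (ρ a)) {a | r < ‖x - a‖} := by
  have h₀ : {a : E | r < ‖a‖} = (closedBall 0 r)ᶜ := by ext a; simp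
  have hx : {a : E | r < ‖x - a‖} = (closedBall x r)ᶜ := by ext a; simp [dist_eq_norm']
  rw [h₀, hx]
  refine withDensity_le_withDensity_of_forall_le measurableSet_closedBall.compl
    measurableSet_closedBall.compl ?_ fun a ha b hb => ?_
  · rw [compl_sdiff_compl, compl_sdiff_compl]
    exact measure_closedBall_diff_closedBall_comm x 0 r
  · simp only [compl_sdiff_compl, mem_sdiff, mem_closedBall_zero_iff, not_le] at ha hb
    exact ENNReal.ofReal_le_ofReal (hρ b a (hb.1.trans ha.2.le))

theorem RadiallyAntitone.lintegral_rpow_norm_mul_le {ρ : E → ℝ} (hρ : RadiallyAntitone ρ)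
    (hρm : AEMeasurable ρ μ) {p : ℝ} (hp : 0 < p) (x : E) :
    ∫⁻ y, ENNReal.ofReal (‖y‖ ^ p * ρ y) ∂μ ≤ ∫⁻ y, ENNReal.ofReal (‖x - y‖ ^ p * ρ y) ∂μ := by
  set ν := μ.withDensity fun a => ENNReal.ofReal (ρ a)
  have hweight : ∀ c : E,
      ∫⁻ y, ENNReal.ofReal (‖c - y‖ ^ p * ρ y) ∂μ = ∫⁻ y, ENNReal.ofReal (‖c - y‖ ^ p) ∂ν := by
    intro c
    rw [lintegral_withDensity_eq_lintegral_mul₀ hρm.ennreal_ofReal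
      ((continuous_sub_left c).norm.rpow_const fun _ => Or.inr hp.le).aemeasurable.ennreal_ofReal]
    refine lintegral_congr fun y => ?_
    rw [Pi.mul_apply, ENNReal.ofReal_mul (by positivity), mul_comm]
  have hweight₀ := hweight 0
  simp only [zero_sub, norm_neg] at hweight₀
  rw [hweight₀, hweight x]
  exact lintegral_rpow_le_lintegral_rpow_of_meas_lt_le (ae_of_all _ fun _ => norm_nonneg _)
    (ae_of_all _ fun _ => norm_nonneg _) measurable_norm.aemeasurable
    (continuous_sub_left x).norm.aemeasurable hp (hρ.withDensity_lt_norm_le_lt_norm_sub x)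

end HaarMeasure

theorem rpow_norm_sub_le {F : Type*} [SeminormedAddCommGroup F] (x y : F) {p : ℝ} (hp : 0 ≤ p) :
    ‖x - y‖ ^ p ≤ 2 ^ p * (‖x‖ ^ p + ‖y‖ ^ p) := by
  wlog h : ‖y‖ ≤ ‖x‖ generalizing x y
  · rw [norm_sub_rev, add_comm]
    exact this y x (le_of_not_ge h)
  calc ‖x - y‖ ^ p ≤ (2 * ‖x‖) ^ p :=
        rpow_le_rpow (norm_nonneg _) (by linarith [norm_sub_le x y]) hp
    _ = 2 ^ p * ‖x‖ ^ p := mul_rpow zero_le_two (norm_nonneg _)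
    _ ≤ 2 ^ p * (‖x‖ ^ p + ‖y‖ ^ p) := by gcongr; exact le_add_of_nonneg_right (by positivity)

section Interaction

variable {E : Type*} [NormedAddCommGroup E] {ρ : E → ℝ} {p : ℝ}

theorem rpow_norm_sub_mul_le (hρ₀ : ∀ y, 0 ≤ ρ y) (hp : 0 ≤ p) (x y : E) :
    ‖x - y‖ ^ p * ρ y ≤ 2 ^ p * (‖x‖ ^ p * ρ y + ‖y‖ ^ p * ρ y) :=
  calc ‖x - y‖ ^ p * ρ y ≤ 2 ^ p * (‖x‖ ^ p + ‖y‖ ^ p) * ρ y :=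
        mul_le_mul_of_nonneg_right (rpow_norm_sub_le x y hp) (hρ₀ y)
    _ = 2 ^ p * (‖x‖ ^ p * ρ y + ‖y‖ ^ p * ρ y) := by ring

variable [MeasurableSpace E] {μ : Measure E}

theorem integral_rpow_norm_sub_mul_mul (x : E) :
    ∫ y, ‖x - y‖ ^ p * ρ x * ρ y ∂μ = ρ x * ∫ y, ‖x - y‖ ^ p * ρ y ∂μ := by
  rw [← integral_const_mul]
  congr 1 with y
  ring

variable [BorelSpace E]

theorem integrable_rpow_norm_sub_mul (hρ₀ : ∀ y, 0 ≤ ρ y) (hρ : Integrable ρ μ)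
    (hmom : Integrable (fun y => ‖y‖ ^ p * ρ y) μ) (hp : 0 ≤ p) (x : E) :
    Integrable (fun y => ‖x - y‖ ^ p * ρ y) μ :=
  (((hρ.const_mul (‖x‖ ^ p)).add hmom).const_mul (2 ^ p)).mono'
    (((continuous_sub_left x).norm.rpow_const fun _ => Or.inr hp).aestronglyMeasurable.mul
      hρ.aestronglyMeasurable)
    (ae_of_all _ fun y => by
      rw [norm_of_nonneg (mul_nonneg (by positivity) (hρ₀ y))]
      exact rpow_norm_sub_mul_le hρ₀ hp x y)

theorem integral_rpow_norm_sub_mul_le (hρ₀ : ∀ y, 0 ≤ ρ y) (hρ : Integrable ρ μ)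
    (hmom : Integrable (fun y => ‖y‖ ^ p * ρ y) μ) (hp : 0 ≤ p) (x : E) :
    ∫ y, ‖x - y‖ ^ p * ρ y ∂μ ≤ 2 ^ p * (‖x‖ ^ p * ∫ y, ρ y ∂μ + ∫ y, ‖y‖ ^ p * ρ y ∂μ) :=
  calc ∫ y, ‖x - y‖ ^ p * ρ y ∂μ ≤ ∫ y, 2 ^ p * (‖x‖ ^ p * ρ y + ‖y‖ ^ p * ρ y) ∂μ :=
        integral_mono (integrable_rpow_norm_sub_mul hρ₀ hρ hmom hp x)
          (((hρ.const_mul _).add hmom).const_mul _) (rpow_norm_sub_mul_le hρ₀ hp x)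
    _ = 2 ^ p * (‖x‖ ^ p * ∫ y, ρ y ∂μ + ∫ y, ‖y‖ ^ p * ρ y ∂μ) := by
        rw [integral_const_mul, integral_add (hρ.const_mul _) hmom, integral_const_mul]

theorem integrable_integral_rpow_norm_sub_mul_mul [SecondCountableTopology E] [SFinite μ]
    (hρ₀ : ∀ y, 0 ≤ ρ y) (hρ : Integrable ρ μ) (hmom : Integrable (fun y => ‖y‖ ^ p * ρ y) μ)
    (hp : 0 ≤ p) :
    Integrable (fun x => ∫ y, ‖x - y‖ ^ p * ρ x * ρ y ∂μ) μ := by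
  have hmeas : AEStronglyMeasurable (fun z : E × E => ‖z.1 - z.2‖ ^ p * ρ z.1 * ρ z.2)
      (μ.prod μ) :=
    ((((continuous_fst.sub continuous_snd).norm.rpow_const fun _ => Or.inr hp)
      |>.aestronglyMeasurable).mul hρ.aestronglyMeasurable.comp_fst).mul
      hρ.aestronglyMeasurable.comp_snd
  refine ((hmom.const_mul (2 ^ p * ∫ y, ρ y ∂μ)).add
    (hρ.const_mul (2 ^ p * ∫ y, ‖y‖ ^ p * ρ y ∂μ))).mono' hmeas.integral_prod_right'
    (ae_of_all _ fun x => ?_)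
  have hpot₀ : 0 ≤ ∫ y, ‖x - y‖ ^ p * ρ y ∂μ :=
    integral_nonneg fun y => mul_nonneg (by positivity) (hρ₀ y)
  rw [integral_rpow_norm_sub_mul_mul, norm_of_nonneg (mul_nonneg (hρ₀ x) hpot₀)]
  calc ρ x * ∫ y, ‖x - y‖ ^ p * ρ y ∂μ
      ≤ ρ x * (2 ^ p * (‖x‖ ^ p * ∫ y, ρ y ∂μ + ∫ y, ‖y‖ ^ p * ρ y ∂μ)) :=
        mul_le_mul_of_nonneg_left (integral_rpow_norm_sub_mul_le hρ₀ hρ hmom hp x) (hρ₀ x)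
    _ = _ := by simp only [Pi.add_apply]; ring

theorem RadiallyAntitone.integral_rpow_norm_mul_le [ProperSpace E] [μ.IsAddHaarMeasure]
    (hρ : RadiallyAntitone ρ) (hρ₀ : ∀ y, 0 ≤ ρ y) (hρint : Integrable ρ μ)
    (hmom : Integrable (fun y => ‖y‖ ^ p * ρ y) μ) (hp : 0 < p) (x : E) :
    ∫ y, ‖y‖ ^ p * ρ y ∂μ ≤ ∫ y, ‖x - y‖ ^ p * ρ y ∂μ := by
  have hint := integrable_rpow_norm_sub_mul hρ₀ hρint hmom hp.le x
  rw [integral_eq_lintegral_of_nonneg_ae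
      (ae_of_all _ fun y => mul_nonneg (by positivity) (hρ₀ y)) hmom.aestronglyMeasurable,
    integral_eq_lintegral_of_nonneg_ae
      (ae_of_all _ fun y => mul_nonneg (by positivity) (hρ₀ y)) hint.aestronglyMeasurable]
  exact ENNReal.toReal_mono hint.lintegral_lt_top.ne
    (hρ.lintegral_rpow_norm_mul_le hρint.aemeasurable hp x)

end Interaction

theorem interaction_ge_moment_general (N : ℕ) (lam : ℝ) (hlam : 0 < lam)
    (ρ : EuclideanSpace ℝ (Fin N) → ℝ) (hρ0 : ∀ x, 0 ≤ ρ x)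
    (hρint : Integrable ρ) (hρmass : ∫ x, ρ x = 1)
    (hmono : ∀ x y : EuclideanSpace ℝ (Fin N), ‖x‖ ≤ ‖y‖ → ρ y ≤ ρ x)
    (hmom : Integrable (fun x => ‖x‖ ^ lam * ρ x)) :
    ∫ x, ∫ y, ‖x - y‖ ^ lam * ρ x * ρ y ≥ ∫ x, ‖x‖ ^ lam * ρ x := by
  have hρ : RadiallyAntitone ρ := hmono
  calc ∫ x, ‖x‖ ^ lam * ρ x = ∫ x, ρ x * ∫ y, ‖y‖ ^ lam * ρ y := by
        rw [integral_mul_const, hρmass, one_mul]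
    _ ≤ ∫ x, ∫ y, ‖x - y‖ ^ lam * ρ x * ρ y :=
        integral_mono (hρint.mul_const _)
          (integrable_integral_rpow_norm_sub_mul_mul hρ0 hρint hmom hlam.le) fun x => by
            rw [integral_rpow_norm_sub_mul_mul]
            exact mul_le_mul_of_nonneg_left
              (hρ.integral_rpow_norm_mul_le hρ0 hρint hmom hlam x) (hρ0 x)

theorem interaction_ge_moment (N : ℕ) (hN : 1 ≤ N) (lam q : ℝ)
    (hlam : 0 < lam) (hq1 : (N : ℝ) / (N + lam) < q) (hq2 : q < 1)
    (ρ : EuclideanSpace ℝ (Fin N) → ℝ) (hρ0 : ∀ x, 0 ≤ ρ x)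
    (hρint : Integrable ρ) (hρmass : ∫ x, ρ x = 1)
    (hrad : ∀ x y : EuclideanSpace ℝ (Fin N), ‖x‖ = ‖y‖ → ρ x = ρ y)
    (hmono : ∀ x y : EuclideanSpace ℝ (Fin N), ‖x‖ ≤ ‖y‖ → ρ y ≤ ρ x)
    (hmom : Integrable (fun x => ‖x‖ ^ lam * ρ x)) :
    ∫ x, ∫ y, ‖x - y‖ ^ lam * ρ x * ρ y ≥ ∫ x, ‖x‖ ^ lam * ρ x :=
  interaction_ge_moment_general N lam hlam ρ hρ0 hρint hρmass hmono hmom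
end
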